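/- For all 0 < ε ≤ 1, all x with 1 − |cos(x)| > 0, all s ∈ [0,2π] with |sin((s−α)/2)| > ε and |sin((s+α)/2)| > ε, and all u ∈ [0,2π], the function g_x^α satisfies |g_x^α(s,u)| ≤ 1/(ε² (1 − |cos(x)|)). -/

import Mathlib

/-! The numerator of `gfun` is a product of three sines, so it is at most `1` in absolute value.
The denominator `A b² + B a²` (with `A, B` the squared half-angle sines in `u ∓ x` and `a, b` those
in `s ∓ α`) is at least `ε² (A + B)`, and `A + B = 1 - cos u cos x ≥ 1 - |cos x|`. -/

open Real

noncomputable def gfun (α x s u : ℝ) : ℝ :=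
  Real.sin x * Real.sin ((s - α) / 2) * Real.sin ((s + α) / 2) /
    (Real.sin ((u - x) / 2) ^ 2 * Real.sin ((s + α) / 2) ^ 2
      + Real.sin ((u + x) / 2) ^ 2 * Real.sin ((s - α) / 2) ^ 2)

lemma sin_sq_half_sub_add_sin_sq_half_add (u x : ℝ) :
    sin ((u - x) / 2) ^ 2 + sin ((u + x) / 2) ^ 2 = 1 - cos u * cos x := by
  rw [sin_sq_eq_half_sub, sin_sq_eq_half_sub, show 2 * ((u - x) / 2) = u - x by ring,
    show 2 * ((u + x) / 2) = u + x by ring, cos_sub, cos_add]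
  ring

lemma one_sub_abs_cos_le_sin_sq_half_sub_add_sin_sq_half_add (u x : ℝ) :
    1 - |cos x| ≤ sin ((u - x) / 2) ^ 2 + sin ((u + x) / 2) ^ 2 := by
  have hcos : cos u * cos x ≤ |cos x| :=
    calc cos u * cos x ≤ |cos u| * |cos x| := by rw [← abs_mul]; exact le_abs_self _
      _ ≤ 1 * |cos x| := by gcongr; exact abs_cos_le_one u
      _ = |cos x| := one_mul _
  rw [sin_sq_half_sub_add_sin_sq_half_add]
  linarith

lemma mul_add_le_mul_sq_add_mul_sq {A B a b c : ℝ} (hA : 0 ≤ A) (hB : 0 ≤ B)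
    (ha : c ≤ a ^ 2) (hb : c ≤ b ^ 2) : c * (A + B) ≤ A * b ^ 2 + B * a ^ 2 := by
  nlinarith [mul_le_mul_of_nonneg_left hb hA, mul_le_mul_of_nonneg_left ha hB]

lemma abs_sin_mul_sin_mul_sin_le_one (x y z : ℝ) : |sin x * sin y * sin z| ≤ 1 := by
  rw [abs_mul, abs_mul]
  calc |sin x| * |sin y| * |sin z| ≤ 1 * 1 * 1 := by
        gcongr <;> exact abs_sin_le_one _
    _ = 1 := by ring

lemma sq_lt_sq_of_lt_abs {ε a : ℝ} (hε : 0 < ε) (h : ε < |a|) : ε ^ 2 < a ^ 2 := by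
  simpa only [sq_abs] using pow_lt_pow_left₀ h hε.le two_ne_zero

theorem gfun_bound (α : ℝ) (ε : ℝ) (hε0 : 0 < ε)
    (x : ℝ) (hx : 0 < 1 - |Real.cos x|)
    (s : ℝ)
    (hs1 : ε < |Real.sin ((s - α) / 2)|) (hs2 : ε < |Real.sin ((s + α) / 2)|)
    (u : ℝ) :
    |gfun α x s u| ≤ 1 / (ε ^ 2 * (1 - |Real.cos x|)) := by
  have hbound : 0 < ε ^ 2 * (1 - |cos x|) := by positivity
  have hden : ε ^ 2 * (1 - |cos x|) ≤ sin ((u - x) / 2) ^ 2 * sin ((s + α) / 2) ^ 2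
      + sin ((u + x) / 2) ^ 2 * sin ((s - α) / 2) ^ 2 :=
    calc ε ^ 2 * (1 - |cos x|)
        ≤ ε ^ 2 * (sin ((u - x) / 2) ^ 2 + sin ((u + x) / 2) ^ 2) := by
          gcongr; exact one_sub_abs_cos_le_sin_sq_half_sub_add_sin_sq_half_add u x
      _ ≤ _ := mul_add_le_mul_sq_add_mul_sq (sq_nonneg _) (sq_nonneg _)
          (sq_lt_sq_of_lt_abs hε0 hs1).le (sq_lt_sq_of_lt_abs hε0 hs2).le
  rw [gfun, abs_div, abs_of_pos (hbound.trans_le hden)]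
  exact div_le_div₀ zero_le_one (abs_sin_mul_sin_mul_sin_le_one _ _ _) hbound hden
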